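/- arXiv:1712.03402 — 4 statements merged into one kernel-verified Lean document; each statement's English description precedes it below -/
import Mathlib

section
/- For any z, w in the open unit disk, |1 - (1-|z|^2)(1-|w|^2)/(1-conj(w)z)^2| ≤ 3 ρ(z,w). -/
/-!
Put `d = 1 - w̄z`. Since `|d|² - |z - w|² = (1 - |z|²)(1 - |w|²)`, the quantity inside the norm
equals `(d - d̄)/d + |z - w|²/d²`. The second term has modulus `ρ² ≤ ρ`, and
`d - d̄ = w̄(w - z) + w·conj(z - w)` gives modulus at most `2ρ` for the first.
-/

open Complex

open ComplexConjugate

namespace Complex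

theorem norm_one_sub_conj_mul_sq_sub_norm_sub_sq (z w : ℂ) :
    ‖1 - conj w * z‖ ^ 2 - ‖z - w‖ ^ 2 = (1 - ‖z‖ ^ 2) * (1 - ‖w‖ ^ 2) := by
  simp only [← normSq_eq_norm_sq, normSq_apply, sub_re, sub_im, mul_re, mul_im, conj_re,
    conj_im, one_re, one_im]
  ring

theorem norm_sub_le_norm_one_sub_conj_mul {z w : ℂ} (hz : ‖z‖ ≤ 1) (hw : ‖w‖ ≤ 1) :
    ‖z - w‖ ≤ ‖1 - conj w * z‖ := by
  have hprod : 0 ≤ (1 - ‖z‖ ^ 2) * (1 - ‖w‖ ^ 2) :=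
    mul_nonneg (by nlinarith [norm_nonneg z]) (by nlinarith [norm_nonneg w])
  have hsq := norm_one_sub_conj_mul_sq_sub_norm_sub_sq z w
  exact (pow_le_pow_iff_left₀ (norm_nonneg _) (norm_nonneg _) two_ne_zero).mp (by linarith)

theorem one_sub_conj_mul_ne_zero {z w : ℂ} (hz : ‖z‖ < 1) (hw : ‖w‖ ≤ 1) :
    1 - conj w * z ≠ 0 := by
  have hlt : ‖conj w * z‖ < 1 := by
    rw [norm_mul, norm_conj]
    nlinarith [norm_nonneg z, norm_nonneg w]
  intro h
  rw [← sub_eq_zero.mp h, norm_one] at hlt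
  exact hlt.false

theorem norm_sub_conj_one_sub_conj_mul_le (z w : ℂ) :
    ‖(1 - conj w * z) - conj (1 - conj w * z)‖ ≤ 2 * ‖w‖ * ‖z - w‖ := by
  have hsplit : (1 - conj w * z) - conj (1 - conj w * z) = conj w * (w - z) + w * conj (z - w) := by
    simp only [map_sub, map_one, map_mul, conj_conj]
    ring
  rw [hsplit]
  calc ‖conj w * (w - z) + w * conj (z - w)‖
      ≤ ‖conj w * (w - z)‖ + ‖w * conj (z - w)‖ := norm_add_le _ _
    _ = 2 * ‖w‖ * ‖z - w‖ := by
      rw [norm_mul, norm_mul, norm_conj, norm_conj, norm_sub_rev w z]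
      ring

theorem norm_one_sub_div_sq_le {d : ℂ} (hd : d ≠ 0) (u : ℂ) :
    ‖1 - ((‖d‖ ^ 2 - ‖u‖ ^ 2 : ℝ) : ℂ) / d ^ 2‖ ≤ ‖d - conj d‖ / ‖d‖ + ‖u / d‖ ^ 2 := by
  have hsplit : 1 - ((‖d‖ ^ 2 - ‖u‖ ^ 2 : ℝ) : ℂ) / d ^ 2 = (d - conj d) / d + u * conj u / d ^ 2 := by
    push_cast
    rw [← mul_conj', ← mul_conj']
    field_simp
    ring
  rw [hsplit]
  calc ‖(d - conj d) / d + u * conj u / d ^ 2‖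
      ≤ ‖(d - conj d) / d‖ + ‖u * conj u / d ^ 2‖ := norm_add_le _ _
    _ = ‖d - conj d‖ / ‖d‖ + ‖u / d‖ ^ 2 := by
      rw [norm_div, norm_div, norm_mul, norm_conj, norm_pow, norm_div]
      ring

end Complex

theorem lemma21 (z w : ℂ) (hz : ‖z‖ < 1) (hw : ‖w‖ < 1) :
    ‖(1 - ((1 - ‖z‖ ^ 2) * (1 - ‖w‖ ^ 2) : ℝ)
        / (1 - (starRingEnd ℂ) w * z) ^ 2)‖
      ≤ 3 * ‖(z - w) / (1 - (starRingEnd ℂ) w * z)‖ := by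
  set d := 1 - conj w * z
  have hd : d ≠ 0 := one_sub_conj_mul_ne_zero hz hw.le
  have hρ : ‖(z - w) / d‖ ≤ 1 := by
    rw [norm_div]
    exact div_le_one_of_le₀ (norm_sub_le_norm_one_sub_conj_mul hz.le hw.le) (norm_nonneg _)
  have hconj : ‖d - conj d‖ / ‖d‖ ≤ 2 * ‖(z - w) / d‖ := by
    rw [norm_div, mul_div_assoc']
    gcongr
    calc ‖d - conj d‖ ≤ 2 * ‖w‖ * ‖z - w‖ := norm_sub_conj_one_sub_conj_mul_le z w
      _ ≤ 2 * ‖z - w‖ := by nlinarith [norm_nonneg (z - w)]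
  rw [← norm_one_sub_conj_mul_sq_sub_norm_sub_sq]
  calc _ ≤ ‖d - conj d‖ / ‖d‖ + ‖(z - w) / d‖ ^ 2 := norm_one_sub_div_sq_le hd (z - w)
    _ ≤ 2 * ‖(z - w) / d‖ + ‖(z - w) / d‖ :=
      add_le_add hconj (pow_le_of_le_one (norm_nonneg _) hρ two_ne_zero)
    _ = 3 * ‖(z - w) / d‖ := by ring
end

section
/- For any z, w in the open unit disk, ρ(z,w)^2 ≤ ♭(z,w), where ♭(z,w) = sup over analytic f on D with Bloch seminorm at most 1 of |(1-|z|^2) f'(z) - (1-|w|^2) f'(w)|. -/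
/-! The Möbius automorphism `φ_w(ζ) = (ζ - w) / (1 - w̄ ζ)` is an admissible test function: by the
Schwarz–Pick identity `(1 - |ζ|²) |φ_w'(ζ)| = 1 - |φ_w(ζ)|²` its Bloch seminorm is `1`, its
normalized derivative is `1` at `w`, and at `z` it is a number `A` with `|A| = 1 - ρ(z,w)²`.
Hence `♭(z,w) ≥ |A - 1| ≥ 1 - |A| = ρ(z,w)²`. -/

open Complex ComplexConjugate Metric

noncomputable def mobius (w : ℂ) (ζ : ℂ) : ℂ := (ζ - w) / (1 - conj w * ζ)

/-- `♭(z,w)` is the supremum of this set. -/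
def flatSet (z w : ℂ) : Set ℝ :=
  {x : ℝ | ∃ f : ℂ → ℂ, DifferentiableOn ℂ f (ball (0 : ℂ) 1) ∧
    (∀ ζ : ℂ, ‖ζ‖ < 1 → (1 - ‖ζ‖ ^ 2) * ‖deriv f ζ‖ ≤ 1) ∧
    x = ‖((1 - ‖z‖ ^ 2 : ℝ) : ℂ) * deriv f z - ((1 - ‖w‖ ^ 2 : ℝ) : ℂ) * deriv f w‖}

theorem sq_norm_one_sub_conj_mul (z w : ℂ) :
    ‖1 - conj w * z‖ ^ 2 = ‖z - w‖ ^ 2 + (1 - ‖z‖ ^ 2) * (1 - ‖w‖ ^ 2) := by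
  simp only [Complex.sq_norm, normSq_apply, sub_re, sub_im, mul_re, mul_im, one_re, one_im, conj_re,
    conj_im]
  ring

theorem one_sub_conj_mul_ne_zero {z w : ℂ} (hz : ‖z‖ ≤ 1) (hw : ‖w‖ < 1) :
    1 - conj w * z ≠ 0 := by
  have : ‖conj w * z‖ < 1 := by
    rw [norm_mul, norm_conj]
    nlinarith [norm_nonneg w, norm_nonneg z]
  intro h
  rw [← eq_of_sub_eq_zero h, norm_one] at this
  exact lt_irrefl 1 this

theorem hasDerivAt_mobius {w ζ : ℂ} (h : 1 - conj w * ζ ≠ 0) :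
    HasDerivAt (mobius w) ((1 - conj w * w) / (1 - conj w * ζ) ^ 2) ζ := by
  have hnum : HasDerivAt (fun x : ℂ => x - w) 1 ζ := (hasDerivAt_id ζ).sub_const w
  have hden : HasDerivAt (fun x : ℂ => 1 - conj w * x) (-conj w) ζ := by
    simpa using ((hasDerivAt_id ζ).const_mul (conj w)).const_sub 1
  exact (hnum.div hden h).congr_deriv (by ring)

theorem one_sub_sq_norm_mobius {w ζ : ℂ} (h : 1 - conj w * ζ ≠ 0) :
    1 - ‖mobius w ζ‖ ^ 2 = (1 - ‖ζ‖ ^ 2) * (1 - ‖w‖ ^ 2) / ‖1 - conj w * ζ‖ ^ 2 := by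
  have hpos : 0 < ‖1 - conj w * ζ‖ ^ 2 := by positivity
  rw [mobius, norm_div, div_pow, eq_div_iff hpos.ne', sub_mul, div_mul_cancel₀ _ hpos.ne',
    sq_norm_one_sub_conj_mul]
  ring

theorem norm_one_sub_conj_mul_self {w : ℂ} (hw : ‖w‖ ≤ 1) : ‖1 - conj w * w‖ = 1 - ‖w‖ ^ 2 := by
  rw [conj_mul', ← ofReal_pow, ← ofReal_one, ← ofReal_sub, norm_real, Real.norm_eq_abs,
    abs_of_nonneg (by nlinarith [norm_nonneg w])]

theorem mul_norm_deriv_mobius {w ζ : ℂ} (hw : ‖w‖ < 1) (hζ : ‖ζ‖ < 1) :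
    (1 - ‖ζ‖ ^ 2) * ‖deriv (mobius w) ζ‖ = 1 - ‖mobius w ζ‖ ^ 2 := by
  have h := one_sub_conj_mul_ne_zero hζ.le hw
  rw [(hasDerivAt_mobius h).deriv, one_sub_sq_norm_mobius h, norm_div, norm_pow,
    norm_one_sub_conj_mul_self hw.le, mul_div_assoc]

theorem mul_deriv_mobius_self {w : ℂ} (hw : ‖w‖ < 1) :
    ((1 - ‖w‖ ^ 2 : ℝ) : ℂ) * deriv (mobius w) w = 1 := by
  have h := one_sub_conj_mul_ne_zero hw.le hw
  rw [(hasDerivAt_mobius h).deriv, conj_mul'] at *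
  push_cast
  field_simp

theorem flatSet_bddAbove {z w : ℂ} (hz : ‖z‖ < 1) (hw : ‖w‖ < 1) : BddAbove (flatSet z w) := by
  have normalized_le_one (ζ : ℂ) (f : ℂ → ℂ) (hζ : ‖ζ‖ < 1)
      (hf : (1 - ‖ζ‖ ^ 2) * ‖deriv f ζ‖ ≤ 1) : ‖((1 - ‖ζ‖ ^ 2 : ℝ) : ℂ) * deriv f ζ‖ ≤ 1 := by
    rwa [norm_mul, norm_real, Real.norm_eq_abs, abs_of_pos (by nlinarith [norm_nonneg ζ])]
  refine ⟨2, ?_⟩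
  rintro x ⟨f, -, hf, rfl⟩
  calc _ ≤ _ + _ := norm_sub_le _ _
    _ ≤ 1 + 1 := add_le_add (normalized_le_one z f hz (hf z hz)) (normalized_le_one w f hw (hf w hw))
    _ = 2 := by norm_num

theorem norm_mul_deriv_mobius_sub_one_mem_flatSet {z w : ℂ} (hw : ‖w‖ < 1) :
    ‖((1 - ‖z‖ ^ 2 : ℝ) : ℂ) * deriv (mobius w) z - 1‖ ∈ flatSet z w := by
  refine ⟨mobius w, fun ζ hζ => ?_, fun ζ hζ => ?_, by rw [mul_deriv_mobius_self hw]⟩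
  · rw [mem_ball_zero_iff] at hζ
    exact (hasDerivAt_mobius (one_sub_conj_mul_ne_zero hζ.le hw)).differentiableAt
      |>.differentiableWithinAt
  · rw [mul_norm_deriv_mobius hw hζ]
    linarith [sq_nonneg ‖mobius w ζ‖]

theorem rho_sq_le_flat (z w : ℂ) (hz : ‖z‖ < 1) (hw : ‖w‖ < 1) :
    ‖(z - w) / (1 - (starRingEnd ℂ) w * z)‖ ^ 2
      ≤ sSup {x : ℝ | ∃ f : ℂ → ℂ, DifferentiableOn ℂ f (ball (0 : ℂ) 1) ∧
          (∀ ζ : ℂ, ‖ζ‖ < 1 → (1 - ‖ζ‖ ^ 2) * ‖deriv f ζ‖ ≤ 1) ∧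
          x = ‖((1 - ‖z‖ ^ 2 : ℝ) : ℂ) * deriv f z
            - ((1 - ‖w‖ ^ 2 : ℝ) : ℂ) * deriv f w‖} := by
  change ‖mobius w z‖ ^ 2 ≤ sSup (flatSet z w)
  set A := ((1 - ‖z‖ ^ 2 : ℝ) : ℂ) * deriv (mobius w) z
  have hA : ‖A‖ = 1 - ‖mobius w z‖ ^ 2 := by
    rw [norm_mul, norm_real, Real.norm_eq_abs, abs_of_pos (by nlinarith [norm_nonneg z]),
      mul_norm_deriv_mobius hw hz]
  calc ‖mobius w z‖ ^ 2 = ‖(1 : ℂ)‖ - ‖A‖ := by rw [hA, norm_one]; ring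
    _ ≤ ‖A - 1‖ := by rw [norm_sub_rev]; exact norm_sub_norm_le 1 A
    _ ≤ sSup (flatSet z w) :=
      le_csSup (flatSet_bddAbove hz hw) (norm_mul_deriv_mobius_sub_one_mem_flatSet hw)
end

section
/- For any z, w in the open unit disk, ♭(z,w) ≤ 18 ρ(z,w), where ♭(z,w) = sup over analytic f with Bloch seminorm at most 1 of |(1-|z|^2) f'(z) - (1-|w|^2) f'(w)|. -/
/-!
For `ρ ≥ 1/9` it suffices that both terms have norm at most `1`. For `ρ < 1/9` one has
`|z - w| ≤ (9/8) ρ (1 - |w|²)`, so `z` lies in the disk of radius `(1 - |w|²)/4` about `w`, on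
which `|f'| ≤ 2/(1 - |w|²)`. The Schwarz lemma on that disk gives
`|f'(z) - f'(w)| ≤ 12 |z - w| / (1 - |w|²)²`, and splitting the difference as
`(1 - |w|²)(f'(z) - f'(w)) + (|w|² - |z|²) f'(z)` bounds it by `16 |z - w| / (1 - |w|²) ≤ 18 ρ`.
-/

open Complex Metric

noncomputable def pseudoHyperbolicDist (z w : ℂ) : ℝ :=
  ‖(z - w) / (1 - (starRingEnd ℂ) w * z)‖

lemma norm_one_sub_conj_mul_le {z w : ℂ} (hw : ‖w‖ ≤ 1) :
    ‖1 - (starRingEnd ℂ) w * z‖ ≤ (1 - ‖w‖ ^ 2) + ‖z - w‖ := by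
  have hsplit : 1 - (starRingEnd ℂ) w * z
      = ((1 - ‖w‖ ^ 2 : ℝ) : ℂ) + (starRingEnd ℂ) w * (w - z) := by
    push_cast
    rw [← Complex.mul_conj', mul_comm w]
    ring
  have ht : 0 ≤ 1 - ‖w‖ ^ 2 := by nlinarith [norm_nonneg w]
  calc ‖1 - (starRingEnd ℂ) w * z‖
      ≤ ‖((1 - ‖w‖ ^ 2 : ℝ) : ℂ)‖ + ‖(starRingEnd ℂ) w * (w - z)‖ :=
        hsplit ▸ norm_add_le _ _
    _ = (1 - ‖w‖ ^ 2) + ‖w‖ * ‖z - w‖ := by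
        rw [norm_real, Real.norm_of_nonneg ht, norm_mul, norm_conj, norm_sub_rev]
    _ ≤ (1 - ‖w‖ ^ 2) + ‖z - w‖ := by
        gcongr
        exact mul_le_of_le_one_left (norm_nonneg _) hw

lemma norm_sub_le_of_pseudoHyperbolicDist_lt {z w : ℂ} (hz : ‖z‖ < 1) (hw : ‖w‖ < 1)
    (hρ : pseudoHyperbolicDist z w < 1 / 9) :
    ‖z - w‖ ≤ 9 / 8 * pseudoHyperbolicDist z w * (1 - ‖w‖ ^ 2) := by
  have hB : 0 < ‖1 - (starRingEnd ℂ) w * z‖ := by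
    have := norm_sub_norm_le (1 : ℂ) ((starRingEnd ℂ) w * z)
    rw [norm_one, norm_mul, norm_conj] at this
    nlinarith [norm_nonneg z, norm_nonneg w]
  have hd : ‖z - w‖ = pseudoHyperbolicDist z w * ‖1 - (starRingEnd ℂ) w * z‖ := by
    rw [pseudoHyperbolicDist, norm_div, div_mul_cancel₀ _ hB.ne']
  have hρ0 : 0 ≤ pseudoHyperbolicDist z w := norm_nonneg _
  have := mul_le_mul_of_nonneg_left (norm_one_sub_conj_mul_le (z := z) hw.le) hρ0
  nlinarith [norm_nonneg (z - w)]

lemma half_one_sub_sq_norm_lt {w ζ : ℂ} (hw : ‖w‖ ≤ 1)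
    (hζ : ζ ∈ ball w ((1 - ‖w‖ ^ 2) / 4)) :
    (1 - ‖w‖ ^ 2) / 2 < 1 - ‖ζ‖ ^ 2 := by
  rw [mem_ball, dist_eq_norm] at hζ
  have hζw : ‖ζ‖ < ‖w‖ + (1 - ‖w‖ ^ 2) / 4 := by linarith [norm_sub_norm_le ζ w]
  have hsq : ‖ζ‖ ^ 2 < (‖w‖ + (1 - ‖w‖ ^ 2) / 4) ^ 2 := by
    gcongr
  have ha : 0 ≤ 1 - ‖w‖ := sub_nonneg.2 hw
  -- `1 - (a + (1 - a²)/4)² - (1 - a²)/2 = (1 - a²)(1 - a)(7 - a)/16`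
  have hfactor : 0 ≤ (1 - ‖w‖ ^ 2) * (1 - ‖w‖) * (7 - ‖w‖) := by
    have : 0 ≤ 1 - ‖w‖ ^ 2 := by nlinarith [norm_nonneg w]
    exact mul_nonneg (mul_nonneg this ha) (by linarith)
  nlinarith

lemma abs_sq_norm_sub_sq_norm_le {z w : ℂ} (hz : ‖z‖ ≤ 1) (hw : ‖w‖ ≤ 1) :
    |‖z‖ ^ 2 - ‖w‖ ^ 2| ≤ 2 * ‖z - w‖ := by
  rw [sq_sub_sq, abs_mul, abs_of_nonneg (by positivity : 0 ≤ ‖z‖ + ‖w‖)]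
  have := abs_norm_sub_norm_le z w
  nlinarith [abs_nonneg (‖z‖ - ‖w‖)]

lemma norm_le_of_bloch_of_mem_ball {g : ℂ → ℂ}
    (hb : ∀ ζ : ℂ, ‖ζ‖ < 1 → (1 - ‖ζ‖ ^ 2) * ‖g ζ‖ ≤ 1) {w ζ : ℂ} (hw : ‖w‖ < 1)
    (hζ : ζ ∈ ball w ((1 - ‖w‖ ^ 2) / 4)) :
    ‖g ζ‖ ≤ 2 / (1 - ‖w‖ ^ 2) := by
  have hlt := half_one_sub_sq_norm_lt hw.le hζ
  have ht : 0 < 1 - ‖w‖ ^ 2 := by nlinarith [norm_nonneg w]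
  have hζ1 : ‖ζ‖ < 1 := by nlinarith [norm_nonneg ζ]
  rw [le_div_iff₀ ht]
  nlinarith [hb ζ hζ1, norm_nonneg (g ζ)]

lemma norm_sub_le_of_bloch_of_mem_ball {g : ℂ → ℂ} (hg : DifferentiableOn ℂ g (ball 0 1))
    (hb : ∀ ζ : ℂ, ‖ζ‖ < 1 → (1 - ‖ζ‖ ^ 2) * ‖g ζ‖ ≤ 1) {z w : ℂ} (hw : ‖w‖ < 1)
    (hz : z ∈ ball w ((1 - ‖w‖ ^ 2) / 4)) :
    ‖g z - g w‖ ≤ 12 / (1 - ‖w‖ ^ 2) ^ 2 * ‖z - w‖ := by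
  set t := 1 - ‖w‖ ^ 2
  have ht : 0 < t := by nlinarith [norm_nonneg w]
  have hsub : ball w (t / 4) ⊆ ball 0 1 := fun ζ hζ => by
    have := half_one_sub_sq_norm_lt hw.le hζ
    rw [mem_ball_zero_iff]
    nlinarith [norm_nonneg ζ]
  have hgw : ‖g w‖ ≤ 1 / t := by
    rw [le_div_iff₀' ht]
    exact hb w hw
  have hmaps : Set.MapsTo g (ball w (t / 4)) (closedBall (g w) (3 / t)) := fun ζ hζ => by
    rw [mem_closedBall, dist_eq_norm]
    calc ‖g ζ - g w‖ ≤ ‖g ζ‖ + ‖g w‖ := norm_sub_le _ _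
      _ ≤ 2 / t + 1 / t := add_le_add (norm_le_of_bloch_of_mem_ball hb hw hζ) hgw
      _ = 3 / t := by ring
  have := Complex.dist_le_div_mul_dist_of_mapsTo_ball (hg.mono hsub) hmaps hz
  rw [dist_eq_norm, dist_eq_norm] at this
  convert this using 2
  field_simp
  ring

lemma norm_sub_le_pseudoHyperbolicDist_of_bloch {f : ℂ → ℂ}
    (hf : DifferentiableOn ℂ f (ball (0 : ℂ) 1))
    (hb : ∀ ζ : ℂ, ‖ζ‖ < 1 → (1 - ‖ζ‖ ^ 2) * ‖deriv f ζ‖ ≤ 1)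
    {z w : ℂ} (hz : ‖z‖ < 1) (hw : ‖w‖ < 1) :
    ‖((1 - ‖z‖ ^ 2 : ℝ) : ℂ) * deriv f z - ((1 - ‖w‖ ^ 2 : ℝ) : ℂ) * deriv f w‖
      ≤ 18 * pseudoHyperbolicDist z w := by
  set ρ := pseudoHyperbolicDist z w
  set s := 1 - ‖z‖ ^ 2
  set t := 1 - ‖w‖ ^ 2
  set g := deriv f
  have ht : 0 < t := by nlinarith [norm_nonneg w]
  have hterm : ∀ ζ : ℂ, ‖ζ‖ < 1 → ‖((1 - ‖ζ‖ ^ 2 : ℝ) : ℂ) * g ζ‖ ≤ 1 := fun ζ hζ => by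
    rw [norm_mul, norm_real, Real.norm_of_nonneg (by nlinarith [norm_nonneg ζ])]
    exact hb ζ hζ
  rcases le_or_gt (1 / 9) ρ with hρ | hρ
  · calc ‖(s : ℂ) * g z - (t : ℂ) * g w‖ ≤ ‖(s : ℂ) * g z‖ + ‖(t : ℂ) * g w‖ := norm_sub_le _ _
      _ ≤ 1 + 1 := add_le_add (hterm z hz) (hterm w hw)
      _ ≤ 18 * ρ := by linarith
  have hd := norm_sub_le_of_pseudoHyperbolicDist_lt hz hw hρ
  have hzball : z ∈ ball w (t / 4) := by
    rw [mem_ball, dist_eq_norm]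
    nlinarith [norm_nonneg (z - w)]
  have hg : DifferentiableOn ℂ g (ball 0 1) :=
    (hf.analyticOnNhd isOpen_ball).deriv.differentiableOn
  have hgz := norm_le_of_bloch_of_mem_ball hb hw hzball
  have hgzw := norm_sub_le_of_bloch_of_mem_ball hg hb hw hzball
  have hst := abs_sq_norm_sub_sq_norm_le hz.le hw.le
  have hsplit : (s : ℂ) * g z - (t : ℂ) * g w
      = (t : ℂ) * (g z - g w) + ((s - t : ℝ) : ℂ) * g z := by
    push_cast
    ring
  calc ‖(s : ℂ) * g z - (t : ℂ) * g w‖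
      ≤ t * ‖g z - g w‖ + |s - t| * ‖g z‖ := by
        rw [hsplit]
        refine (norm_add_le _ _).trans_eq ?_
        rw [norm_mul, norm_mul, norm_real, norm_real, Real.norm_of_nonneg ht.le, Real.norm_eq_abs]
    _ ≤ t * (12 / t ^ 2 * ‖z - w‖) + 2 * ‖z - w‖ * (2 / t) := by
        gcongr
        rwa [sub_sub_sub_cancel_left, abs_sub_comm]
    _ = 16 / t * ‖z - w‖ := by field_simp; norm_num
    _ ≤ 16 / t * (9 / 8 * ρ * t) := by gcongr
    _ = 18 * ρ := by field_simp; ring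

theorem flat_le_18_rho (z w : ℂ) (hz : ‖z‖ < 1) (hw : ‖w‖ < 1) :
    sSup {x : ℝ | ∃ f : ℂ → ℂ, DifferentiableOn ℂ f (ball (0 : ℂ) 1) ∧
          (∀ ζ : ℂ, ‖ζ‖ < 1 → (1 - ‖ζ‖ ^ 2) * ‖deriv f ζ‖ ≤ 1) ∧
          x = ‖((1 - ‖z‖ ^ 2 : ℝ) : ℂ) * deriv f z
            - ((1 - ‖w‖ ^ 2 : ℝ) : ℂ) * deriv f w‖}
      ≤ 18 * ‖(z - w) / (1 - (starRingEnd ℂ) w * z)‖ := by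
  refine Real.sSup_le ?_ (by positivity)
  rintro x ⟨f, hf, hb, rfl⟩
  exact norm_sub_le_pseudoHyperbolicDist_of_bloch hf hb hz hw
end

section
/- Let u be analytic on the unit disk D and φ an analytic self-map of D. For w ∈ D define f_{φ(w)}(z) = σ_{φ(w)}(z)^2 - φ(w)·σ_{φ(w)}(z), where σ_a(z) = (a-z)/(1-conj(a)z). Then the Bloch seminorm of z ↦ u(z) f_{φ(w)}(φ(z)) is at least (1-|w|^2)|u(w)|·|φ'(w)|·|φ(w)|/(1-|φ(w)|^2). -/
/-!
Since `f_a (a) = 0` for `a = φ(w)`, the product rule kills the `u'(w)` term, so the derivative of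
`u · (f_a ∘ φ)` at `w` is `u(w) f_a'(a) φ'(w)`, and `f_a'(a) = (2σ_a(a) - a) σ_a'(a) = a / (1 - |a|²)`.
Evaluating the Bloch seminorm at the single point `w` gives the bound.
-/

open Complex Metric Topology ComplexConjugate

theorem hasDerivAt_mul_comp_of_apply_eq_zero {𝕜 : Type*} [NontriviallyNormedField 𝕜]
    {u φ g : 𝕜 → 𝕜} {w g' : 𝕜} (hu : DifferentiableAt 𝕜 u w) (hφ : DifferentiableAt 𝕜 φ w)
    (hg : HasDerivAt g g' (φ w)) (hg₀ : g (φ w) = 0) :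
    HasDerivAt (fun z => u z * g (φ z)) (u w * (g' * deriv φ w)) w :=
  (hu.hasDerivAt.mul (hg.comp w hφ.hasDerivAt)).congr_deriv (by simp [hg₀])

-- The paper's `σ_a` and `f_a`.
noncomputable def diskAutomorphism (a ζ : ℂ) : ℂ := (a - ζ) / (1 - conj a * ζ)

noncomputable def blochTestFunction (a ζ : ℂ) : ℂ :=
  diskAutomorphism a ζ ^ 2 - a * diskAutomorphism a ζ

theorem diskAutomorphism_self (a : ℂ) : diskAutomorphism a a = 0 := by
  simp [diskAutomorphism]

theorem one_sub_conj_mul_self (a : ℂ) : 1 - conj a * a = ((1 - ‖a‖ ^ 2 : ℝ) : ℂ) := by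
  push_cast
  rw [conj_mul']

section

variable {a : ℂ}

theorem one_sub_norm_sq_pos (ha : ‖a‖ < 1) : 0 < 1 - ‖a‖ ^ 2 := by
  nlinarith [norm_nonneg a]

theorem hasDerivAt_diskAutomorphism_self (ha : ‖a‖ < 1) :
    HasDerivAt (diskAutomorphism a) (-((1 - ‖a‖ ^ 2 : ℝ) : ℂ)⁻¹) a := by
  have hd : ((1 - ‖a‖ ^ 2 : ℝ) : ℂ) ≠ 0 := by exact_mod_cast (one_sub_norm_sq_pos ha).ne'
  have hden : HasDerivAt (fun ζ : ℂ => 1 - conj a * ζ) (-conj a) a := by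
    simpa using ((hasDerivAt_id a).const_mul (conj a)).const_sub 1
  refine (((hasDerivAt_id a).const_sub a).div hden
    (by rwa [one_sub_conj_mul_self])).congr_deriv ?_
  rw [one_sub_conj_mul_self, id]
  field_simp
  ring

theorem hasDerivAt_blochTestFunction_self (ha : ‖a‖ < 1) :
    HasDerivAt (blochTestFunction a) (a / ((1 - ‖a‖ ^ 2 : ℝ) : ℂ)) a := by
  have hσ := hasDerivAt_diskAutomorphism_self ha
  refine ((hσ.pow 2).sub (hσ.const_mul a)).congr_deriv ?_
  simp only [diskAutomorphism_self]
  ring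

end

theorem bloch_lower_bound_test_function (u φ : ℂ → ℂ)
    (hu : DifferentiableOn ℂ u (ball (0 : ℂ) 1))
    (hφ : DifferentiableOn ℂ φ (ball (0 : ℂ) 1))
    (hφmap : ∀ z : ℂ, ‖z‖ < 1 → ‖φ z‖ < 1)
    (w : ℂ) (hw : ‖w‖ < 1)
    (M : ℝ)
    (hM : ∀ z : ℂ, ‖z‖ < 1 →
      (1 - ‖z‖ ^ 2)
          * ‖(deriv (fun ζ =>
              u ζ * (((φ w - φ ζ) / (1 - (starRingEnd ℂ) (φ w) * φ ζ)) ^ 2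
                - φ w * ((φ w - φ ζ) / (1 - (starRingEnd ℂ) (φ w) * φ ζ)))) z)‖ ≤ M) :
    (1 - ‖w‖ ^ 2) * ‖u w‖ * ‖deriv φ w‖
        * ‖φ w‖ / (1 - ‖φ w‖ ^ 2) ≤ M := by
  have hwD : ball (0 : ℂ) 1 ∈ 𝓝 w := isOpen_ball.mem_nhds (mem_ball_zero_iff.mpr hw)
  have hφw := hφmap w hw
  have hderiv := hasDerivAt_mul_comp_of_apply_eq_zero (hu.differentiableAt hwD)
    (hφ.differentiableAt hwD) (hasDerivAt_blochTestFunction_self hφw)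
    (by simp [blochTestFunction, diskAutomorphism_self])
  have hbound := hM w hw
  change (1 - ‖w‖ ^ 2) * ‖deriv (fun ζ => u ζ * blochTestFunction (φ w) (φ ζ)) w‖ ≤ M at hbound
  rw [hderiv.deriv, norm_mul, norm_mul, norm_div, norm_real, Real.norm_of_nonneg
    (one_sub_norm_sq_pos hφw).le] at hbound
  calc (1 - ‖w‖ ^ 2) * ‖u w‖ * ‖deriv φ w‖ * ‖φ w‖ / (1 - ‖φ w‖ ^ 2)
      = (1 - ‖w‖ ^ 2) * (‖u w‖ * (‖φ w‖ / (1 - ‖φ w‖ ^ 2) * ‖deriv φ w‖)) := by ring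
    _ ≤ M := hbound
end
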